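/- The set X = {(x,y,z) ∈ ℝ³ : (x²+y²−z²)·(x²+(|y|−z−z³)²−z⁶) = 0, z ≥ 0} is not Lipschitz normally embedded at 0: for any C ≥ 1, taking r ∈ (0,1) and the curves α(t) = (t, √(r²−t²), r) and β(t) = (t, r + r³ − √(r⁶−t²), r) for t ∈ (0,r³), which both lie in X, one has ‖α(t)−β(t)‖ = r + r³ − √(r⁶−t²) − √(r²−t²) and d_X(α(t),β(t)) ≥ t, and the ratio d_X(α(t),β(t))/‖α(t)−β(t)‖ is unbounded as t → 0⁺. -/

import Mathlib

/-!
`X14` is the union of the upper half-cone `x² + y² = z²` and the sheet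
`x² + (|y| - z - z³)² = z⁶`, whose horizontal slices are two circles of radius `z³` touching the
slice of the cone from outside. These two closed sets meet only in the plane `x = 0`. A path in
`X14` from `α(t)` on the cone to `β(t)` on the other sheet has a connected image, so it passes
through their intersection, and its length is at least the distance `t` from `α(t)` to that plane.
On the other hand `α(t)` and `β(t)` differ only in the `y`-coordinate, by at most `2t² / r³`, so
the ratio is unbounded as `t → 0`; as both points lie within `3r` of the origin, this happens in
every neighbourhood of `0`.
-/

open Set Filter Metric

/-- Length of a path `γ : [0,1] → E` measured via the (extended) variation. -/
noncomputable def pathLength {E : Type*} [NormedAddCommGroup E] (γ : ℝ → E) : ENNReal :=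
  eVariationOn γ (Set.Icc 0 1)

/-- `γ` is a path in `X` from `x` to `y`, parametrized on `[0,1]`. -/
def IsPathIn {E : Type*} [NormedAddCommGroup E] (X : Set E) (x y : E) (γ : ℝ → E) : Prop :=
  ContinuousOn γ (Set.Icc 0 1) ∧ Set.MapsTo γ (Set.Icc 0 1) X ∧ γ 0 = x ∧ γ 1 = y

/-- The inner (length) distance on `X`: the infimum of the lengths of paths in `X`
joining `x` to `y`. -/
noncomputable def innerDist {E : Type*} [NormedAddCommGroup E] (X : Set E) (x y : E) : ENNReal :=
  ⨅ γ ∈ {γ : ℝ → E | IsPathIn X x y γ}, pathLength γ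

/-- Points of `ℝ³` from three coordinates. -/
noncomputable def mk3 (a b c : ℝ) : EuclideanSpace ℝ (Fin 3) :=
  (WithLp.equiv 2 (Fin 3 → ℝ)).symm ![a, b, c]

/-- The set of Example 3.12:
`X = {(x,y,z) : (x²+y²−z²)·(x²+(|y|−z−z³)²−z⁶) = 0, z ≥ 0}`. -/
def X14 : Set (EuclideanSpace ℝ (Fin 3)) :=
  {p | ((p 0) ^ 2 + (p 1) ^ 2 - (p 2) ^ 2) *
      ((p 0) ^ 2 + (|p 1| - p 2 - (p 2) ^ 3) ^ 2 - (p 2) ^ 6) = 0 ∧ 0 ≤ p 2}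

noncomputable def a14 (r t : ℝ) : EuclideanSpace ℝ (Fin 3) :=
  mk3 t (Real.sqrt (r ^ 2 - t ^ 2)) r

noncomputable def b14 (r t : ℝ) : EuclideanSpace ℝ (Fin 3) :=
  mk3 t (r + r ^ 3 - Real.sqrt (r ^ 6 - t ^ 2)) r

@[simp] lemma mk3_apply_zero (a b c : ℝ) : mk3 a b c 0 = a := rfl
@[simp] lemma mk3_apply_one (a b c : ℝ) : mk3 a b c 1 = b := rfl
@[simp] lemma mk3_apply_two (a b c : ℝ) : mk3 a b c 2 = c := rfl

lemma mk3_sub_mk3 (a b c a' b' c' : ℝ) :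
    mk3 a b c - mk3 a' b' c' = mk3 (a - a') (b - b') (c - c') := by
  ext i
  fin_cases i <;> rfl

lemma norm_mk3 (a b c : ℝ) : ‖mk3 a b c‖ = √(a ^ 2 + b ^ 2 + c ^ 2) := by
  simp [EuclideanSpace.norm_eq, Fin.sum_univ_three]

lemma innerDist_anti {E : Type*} [NormedAddCommGroup E] {X Y : Set E} (h : X ⊆ Y) (x y : E) :
    innerDist Y x y ≤ innerDist X x y :=
  le_iInf₂ fun γ ⟨hc, hm, h0, h1⟩ ↦ iInf₂_le γ ⟨hc, hm.mono_right h, h0, h1⟩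

lemma infEDist_inter_le_innerDist {E : Type*} [NormedAddCommGroup E] {X A B : Set E}
    (hA : IsClosed A) (hB : IsClosed B) (hX : X ⊆ A ∪ B) {x y : E} (hx : x ∈ A) (hy : y ∈ B) :
    infEDist x (A ∩ B) ≤ innerDist X x y := by
  refine le_iInf₂ fun γ ⟨hc, hm, h0, h1⟩ ↦ ?_
  have h0I : (0 : ℝ) ∈ Icc (0 : ℝ) 1 := left_mem_Icc.2 zero_le_one
  obtain ⟨_, ⟨s, hs, rfl⟩, hsAB⟩ := isPreconnected_closed_iff.1
    (isPreconnected_Icc.image γ hc) A B hA hB (image_subset_iff.2 (hm.mono_right hX))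
    ⟨x, ⟨0, h0I, h0⟩, hx⟩ ⟨y, ⟨1, right_mem_Icc.2 zero_le_one, h1⟩, hy⟩
  calc infEDist x (A ∩ B) ≤ edist (γ 0) (γ s) := h0 ▸ infEDist_le_edist_of_mem hsAB
    _ ≤ pathLength γ := eVariationOn.edist_le γ h0I hs

lemma sqrt_sq_sub_sq_le {a : ℝ} (ha : 0 ≤ a) (t : ℝ) : √(a ^ 2 - t ^ 2) ≤ a :=
  Real.sqrt_le_iff.2 ⟨ha, by nlinarith [sq_nonneg t]⟩

lemma sqrt_pow_six_sub_sq_le {r : ℝ} (hr : 0 ≤ r) (t : ℝ) : √(r ^ 6 - t ^ 2) ≤ r ^ 3 := by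
  simpa [← pow_mul] using sqrt_sq_sub_sq_le (pow_nonneg hr 3) t

lemma sub_sqrt_sq_sub_sq_le {a t : ℝ} (ha : 0 < a) (ht : t ^ 2 ≤ a ^ 2) :
    a - √(a ^ 2 - t ^ 2) ≤ t ^ 2 / a := by
  have hs := Real.sq_sqrt (sub_nonneg.2 ht)
  have hsa := sqrt_sq_sub_sq_le ha.le t
  rw [le_div_iff₀ ha]
  nlinarith [Real.sqrt_nonneg (a ^ 2 - t ^ 2)]

lemma sq_le_of_mem_Ioo {r t : ℝ} (hr : r ∈ Ioo (0 : ℝ) 1) (ht : t ∈ Ioo 0 (r ^ 3)) :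
    t ^ 2 ≤ r ^ 6 ∧ t ^ 2 ≤ r ^ 2 := by
  obtain ⟨hr0, hr1⟩ := hr
  have htr : t ^ 2 ≤ r ^ 6 := by nlinarith [ht.1, ht.2]
  exact ⟨htr, htr.trans (pow_le_pow_of_le_one hr0.le hr1.le (by norm_num))⟩

def coneSheet : Set (EuclideanSpace ℝ (Fin 3)) :=
  {p | p 0 ^ 2 + p 1 ^ 2 - p 2 ^ 2 = 0 ∧ 0 ≤ p 2}

def circleSheet : Set (EuclideanSpace ℝ (Fin 3)) :=
  {p | p 0 ^ 2 + (|p 1| - p 2 - p 2 ^ 3) ^ 2 - p 2 ^ 6 = 0 ∧ 0 ≤ p 2}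

lemma X14_eq_union : X14 = coneSheet ∪ circleSheet := by
  ext p
  simp [X14, coneSheet, circleSheet, mul_eq_zero, or_and_right]

lemma isClosed_setOf_eq_zero_and_nonneg {f : EuclideanSpace ℝ (Fin 3) → ℝ}
    (hf : Continuous f) : IsClosed {p : EuclideanSpace ℝ (Fin 3) | f p = 0 ∧ 0 ≤ p 2} :=
  (isClosed_eq hf continuous_const).inter <|
    isClosed_le continuous_const (by fun_prop : Continuous fun p : EuclideanSpace ℝ (Fin 3) ↦ p 2)

lemma isClosed_coneSheet : IsClosed coneSheet :=
  isClosed_setOf_eq_zero_and_nonneg (by fun_prop)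

lemma isClosed_circleSheet : IsClosed circleSheet :=
  isClosed_setOf_eq_zero_and_nonneg (by fun_prop)

/-- The circle sheet lies in `|y| ≥ z`, so on the cone `x² = z² - y² ≤ 0`. -/
lemma apply_zero_eq_zero_of_mem_inter {p : EuclideanSpace ℝ (Fin 3)}
    (hp : p ∈ coneSheet ∩ circleSheet) : p 0 = 0 := by
  obtain ⟨⟨hcone, hz⟩, hcircle, -⟩ := hp
  have hy : p 2 ≤ |p 1| := by
    nlinarith [sq_nonneg (p 0), sq_nonneg (|p 1| - p 2), pow_nonneg hz 3]
  nlinarith [sq_abs (p 1), sq_nonneg (p 0)]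

lemma ofReal_le_infEDist_inter (r t : ℝ) :
    ENNReal.ofReal t ≤ infEDist (a14 r t) (coneSheet ∩ circleSheet) := by
  refine le_infEDist.2 fun p hp ↦ ?_
  calc ENNReal.ofReal t ≤ ENNReal.ofReal (dist (a14 r t 0) (p 0)) := by
        rw [apply_zero_eq_zero_of_mem_inter hp, Real.dist_eq, sub_zero]
        exact ENNReal.ofReal_le_ofReal (le_abs_self t)
    _ ≤ edist (a14 r t) p := by
        rw [← edist_dist]
        exact PiLp.edist_apply_le _ _ 0

lemma a14_mem_coneSheet {r t : ℝ} (hr : 0 ≤ r) (ht : t ^ 2 ≤ r ^ 2) : a14 r t ∈ coneSheet := by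
  refine ⟨?_, hr⟩
  simp only [a14, mk3_apply_zero, mk3_apply_one, mk3_apply_two, Real.sq_sqrt (sub_nonneg.2 ht)]
  ring

lemma b14_mem_circleSheet {r t : ℝ} (hr : 0 ≤ r) (ht : t ^ 2 ≤ r ^ 6) :
    b14 r t ∈ circleSheet := by
  refine ⟨?_, hr⟩
  have hs := sqrt_pow_six_sub_sq_le hr t
  simp only [b14, mk3_apply_zero, mk3_apply_one, mk3_apply_two]
  rw [abs_of_nonneg (by linarith), show ∀ s : ℝ, (r + r ^ 3 - s - r - r ^ 3) ^ 2 = s ^ 2 by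
    intro s; ring, Real.sq_sqrt (sub_nonneg.2 ht)]
  ring

lemma a14_mem_X14 {r t : ℝ} (hr : 0 ≤ r) (ht : t ^ 2 ≤ r ^ 2) : a14 r t ∈ X14 :=
  X14_eq_union ▸ .inl (a14_mem_coneSheet hr ht)

lemma b14_mem_X14 {r t : ℝ} (hr : 0 ≤ r) (ht : t ^ 2 ≤ r ^ 6) : b14 r t ∈ X14 :=
  X14_eq_union ▸ .inr (b14_mem_circleSheet hr ht)

lemma norm_a14_sub_b14 {r : ℝ} (hr : 0 ≤ r) (t : ℝ) :
    ‖a14 r t - b14 r t‖ = r + r ^ 3 - √(r ^ 6 - t ^ 2) - √(r ^ 2 - t ^ 2) := by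
  have h6 := sqrt_pow_six_sub_sq_le hr t
  have h2 := sqrt_sq_sub_sq_le hr t
  rw [a14, b14, mk3_sub_mk3, norm_mk3, ← Real.sqrt_sq (by linarith : 0 ≤ r + r ^ 3 - _ - _)]
  congr 1
  ring

lemma norm_a14_sub_b14_le {r t : ℝ} (hr : 0 < r) (hr1 : r ≤ 1) (ht : t ^ 2 ≤ r ^ 6) :
    ‖a14 r t - b14 r t‖ ≤ 2 * t ^ 2 / r ^ 3 := by
  have h1 : t ^ 2 ≤ r ^ 2 := ht.trans (pow_le_pow_of_le_one hr.le hr1 (by norm_num))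
  rw [show r ^ 6 = (r ^ 3) ^ 2 by ring] at ht
  have hb3 := sub_sqrt_sq_sub_sq_le (pow_pos hr 3) ht
  have hb1 := sub_sqrt_sq_sub_sq_le hr h1
  have hr3 : t ^ 2 / r ≤ t ^ 2 / r ^ 3 :=
    div_le_div_of_nonneg_left (sq_nonneg t) (pow_pos hr 3)
      (pow_le_of_le_one hr.le hr1 (by norm_num))
  rw [norm_a14_sub_b14 hr.le, show r ^ 6 = (r ^ 3) ^ 2 by ring, two_mul, add_div]
  linarith

lemma ofReal_le_innerDist_a14_b14 {r t : ℝ} (hr : 0 ≤ r) (hta : t ^ 2 ≤ r ^ 2)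
    (htb : t ^ 2 ≤ r ^ 6) : ENNReal.ofReal t ≤ innerDist X14 (a14 r t) (b14 r t) :=
  (ofReal_le_infEDist_inter r t).trans <|
    infEDist_inter_le_innerDist isClosed_coneSheet isClosed_circleSheet X14_eq_union.subset
      (a14_mem_coneSheet hr hta) (b14_mem_circleSheet hr htb)

lemma exists_lt_innerDist {C r : ℝ} (hC : 0 ≤ C) (hr : r ∈ Ioo (0 : ℝ) 1) :
    ∃ t ∈ Ioo 0 (r ^ 3),
      ENNReal.ofReal (C * ‖a14 r t - b14 r t‖) < innerDist X14 (a14 r t) (b14 r t) := by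
  have hr3 : 0 < r ^ 3 := pow_pos hr.1 3
  set t := r ^ 3 / (4 * C + 2) with ht_def
  have ht0 : 0 < t := by positivity
  have ht : t ∈ Ioo 0 (r ^ 3) := ⟨ht0, div_lt_self hr3 (by linarith)⟩
  obtain ⟨htb, hta⟩ := sq_le_of_mem_Ioo hr ht
  refine ⟨t, ht, lt_of_lt_of_le ?_ (ofReal_le_innerDist_a14_b14 hr.1.le hta htb)⟩
  refine (ENNReal.ofReal_lt_ofReal_iff ht0).2 (lt_of_le_of_lt
    (mul_le_mul_of_nonneg_left (norm_a14_sub_b14_le hr.1 hr.2.le htb) hC) ?_)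
  have : 2 * t ^ 2 / r ^ 3 = t / (2 * C + 1) := by
    rw [ht_def]; field_simp; ring
  rw [this, mul_div_assoc', div_lt_iff₀ (by linarith)]
  nlinarith

lemma norm_a14_lt {r t : ℝ} (hr : 0 < r) (ht : t ^ 2 ≤ r ^ 2) : ‖a14 r t‖ < 3 * r := by
  rw [a14, norm_mk3, Real.sq_sqrt (sub_nonneg.2 ht), Real.sqrt_lt' (by positivity)]
  nlinarith

lemma norm_b14_lt {r t : ℝ} (hr : r ∈ Ioo (0 : ℝ) 1) (hta : t ^ 2 ≤ r ^ 2) :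
    ‖b14 r t‖ < 3 * r := by
  obtain ⟨hr0, hr1⟩ := hr
  have hs := sqrt_pow_six_sub_sq_le hr0.le t
  have hr3 : r ^ 3 ≤ r := pow_le_of_le_one hr0.le hr1.le (by norm_num)
  have hy0 : 0 ≤ r + r ^ 3 - √(r ^ 6 - t ^ 2) := by linarith
  have hy : r + r ^ 3 - √(r ^ 6 - t ^ 2) ≤ 2 * r := by
    linarith [Real.sqrt_nonneg (r ^ 6 - t ^ 2)]
  rw [b14, norm_mk3, Real.sqrt_lt' (by positivity)]
  nlinarith

/-- `X14` is not Lipschitz normally embedded at `0`: the witness curves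
`α, β` lie on `X14`, satisfy the stated distance formulas and lower bound, the ratio
`d_X/‖·‖` along them is unbounded, and consequently no neighborhood of `0` in `X14` is
Lipschitz normally embedded. -/
theorem stmt14 :
    (∀ r ∈ Set.Ioo (0 : ℝ) 1, ∀ t ∈ Set.Ioo (0 : ℝ) (r ^ 3),
      a14 r t ∈ X14 ∧ b14 r t ∈ X14 ∧
      ‖a14 r t - b14 r t‖
        = r + r ^ 3 - Real.sqrt (r ^ 6 - t ^ 2) - Real.sqrt (r ^ 2 - t ^ 2) ∧
      ENNReal.ofReal t ≤ innerDist X14 (a14 r t) (b14 r t)) ∧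
    (∀ C : ℝ, 1 ≤ C → ∀ r ∈ Set.Ioo (0 : ℝ) 1, ∃ t ∈ Set.Ioo (0 : ℝ) (r ^ 3),
      ENNReal.ofReal (C * ‖a14 r t - b14 r t‖) < innerDist X14 (a14 r t) (b14 r t)) ∧
    (∀ U : Set (EuclideanSpace ℝ (Fin 3)), IsOpen U → (0 : EuclideanSpace ℝ (Fin 3)) ∈ U →
      ¬ ∃ C : ℝ, 1 ≤ C ∧ ∀ p ∈ X14 ∩ U, ∀ q ∈ X14 ∩ U,
        innerDist (X14 ∩ U) p q ≤ ENNReal.ofReal (C * ‖p - q‖)) := by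
  refine ⟨fun r hr t ht ↦ ?_,
    fun C hC r hr ↦ exists_lt_innerDist (zero_le_one.trans hC) hr, ?_⟩
  · obtain ⟨htb, hta⟩ := sq_le_of_mem_Ioo hr ht
    exact ⟨a14_mem_X14 hr.1.le hta, b14_mem_X14 hr.1.le htb, norm_a14_sub_b14 hr.1.le t,
      ofReal_le_innerDist_a14_b14 hr.1.le hta htb⟩
  rintro U hU h0U ⟨C, hC, hLNE⟩
  obtain ⟨ε, hε, hball⟩ := Metric.isOpen_iff.1 hU 0 h0U
  set r := min (ε / 3) (1 / 2)
  have hr : r ∈ Ioo (0 : ℝ) 1 := ⟨by positivity, (min_le_right _ _).trans_lt (by norm_num)⟩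
  have mem_U : ∀ p : EuclideanSpace ℝ (Fin 3), ‖p‖ < 3 * r → p ∈ U := fun p hp ↦
    hball (mem_ball_zero_iff.2 (hp.trans_le (by linarith [min_le_left (ε / 3) (1 / 2)])))
  obtain ⟨t, ht, hlt⟩ := exists_lt_innerDist (zero_le_one.trans hC) hr
  obtain ⟨htb, hta⟩ := sq_le_of_mem_Ioo hr ht
  have hle := hLNE _ ⟨a14_mem_X14 hr.1.le hta, mem_U _ (norm_a14_lt hr.1 hta)⟩
    _ ⟨b14_mem_X14 hr.1.le htb, mem_U _ (norm_b14_lt hr hta)⟩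
  exact (hlt.trans_le ((innerDist_anti inter_subset_left _ _).trans hle)).false
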